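/- arXiv:2312.16087 — 4 statements merged into one kernel-verified Lean document; each statement's English description precedes it below -/
import Mathlib

section
/- Let G be a (c,d,α,δ)-bipartite expander with left vertex set L of size n. Then for every set S ⊆ L with |S| ≤ αn and every integer t ∈ [d], the number of right vertices having between 1 and t neighbors in S is at least ((δ(t+1)-1)/t)·c|S|. -/
open Finset
open scoped Classical

/-! Counting the edges between `S` and its neighbourhood `N(S)` gives `c|S|`. A right vertex with
at most `t` neighbours in `S` contributes at least one edge, any other one at least `t + 1`, so
`(t + 1)|N(S)| ≤ c|S| + t|N_{≤t}(S)|`; combined with `|N(S)| ≥ δc|S|` this is the claim. -/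

theorem sum_card_filter_adj_eq_mul_card {L R : Type*} [Fintype R] (Adj : L → R → Prop)
    [∀ v u, Decidable (Adj v u)] (c : ℕ) (hleft : ∀ v, #(univ.filter (Adj v ·)) = c)
    (S : Finset L) :
    ∑ u, #(S.filter (Adj · u)) = c * #S := by
  have := sum_card_bipartiteAbove_eq_sum_card_bipartiteBelow (s := S) (t := univ) (r := Adj)
  simp only [bipartiteAbove, bipartiteBelow, hleft, sum_const, smul_eq_mul] at this
  rw [← this, mul_comm]

theorem succ_mul_card_filter_pos_le {ι : Type*} (s : Finset ι) (f : ι → ℕ) (t : ℕ) :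
    (t + 1) * #(s.filter (0 < f ·)) ≤
      ∑ i ∈ s, f i + t * #(s.filter fun i => 1 ≤ f i ∧ f i ≤ t) := by
  simp only [card_filter, mul_sum, ← sum_add_distrib]
  refine sum_le_sum fun i _ => ?_
  split_ifs <;> omega

theorem stmt_0_general {L R : Type*} [Fintype R]
    (Adj : L → R → Prop)
    (c n : ℕ) (α δ : ℝ)
    (hleft : ∀ v : L, (univ.filter (fun u : R => Adj v u)).card = c)
    (hexp : ∀ S : Finset L, (S.card : ℝ) ≤ α * n →
      δ * c * S.card ≤
        ((univ.filter (fun u : R => 0 < (S.filter (fun v => Adj v u)).card)).card : ℝ))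
    (S : Finset L) (hS : (S.card : ℝ) ≤ α * n)
    (t : ℕ) (ht1 : 1 ≤ t) :
    (δ * (t + 1) - 1) / t * c * S.card ≤
      ((univ.filter (fun u : R =>
        1 ≤ (S.filter (fun v => Adj v u)).card ∧
          (S.filter (fun v => Adj v u)).card ≤ t)).card : ℝ) := by
  have hcount := succ_mul_card_filter_pos_le univ (fun u => #(S.filter (Adj · u))) t
  rw [sum_card_filter_adj_eq_mul_card Adj c hleft S] at hcount
  have hcountR := (Nat.cast_le (α := ℝ)).mpr hcount
  push_cast at hcountR
  have hexpS := hexp S hS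
  have ht0 : (0 : ℝ) < t := by exact_mod_cast ht1
  rw [div_mul_eq_mul_div, div_mul_eq_mul_div, div_le_iff₀ ht0]
  nlinarith

/-- Proposition 2.1 (folklore expander estimate): in a `(c,d,α,δ)`-bipartite expander,
for every `S ⊆ L` with `|S| ≤ αn` and every `1 ≤ t ≤ d`,
`|N_{≤t}(S)| ≥ ((δ(t+1)-1)/t)·c·|S|`. -/
theorem stmt_0 {L R : Type*} [Fintype L] [Fintype R] [DecidableEq L] [DecidableEq R]
    (Adj : L → R → Prop)
    (c d n : ℕ) (α δ : ℝ)
    (hn : Fintype.card L = n)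
    (hleft : ∀ v : L, (univ.filter (fun u : R => Adj v u)).card = c)
    (hright : ∀ u : R, (univ.filter (fun v : L => Adj v u)).card = d)
    (hexp : ∀ S : Finset L, (S.card : ℝ) ≤ α * n →
      δ * c * S.card ≤
        ((univ.filter (fun u : R => 0 < (S.filter (fun v => Adj v u)).card)).card : ℝ))
    (S : Finset L) (hS : (S.card : ℝ) ≤ α * n)
    (t : ℕ) (ht1 : 1 ≤ t) (htd : t ≤ d) :
    (δ * (t + 1) - 1) / t * c * S.card ≤
      ((univ.filter (fun u : R =>
        1 ≤ (S.filter (fun v => Adj v u)).card ∧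
          (S.filter (fun v => Adj v u)).card ≤ t)).card : ℝ) :=
  stmt_0_general Adj c n α δ hleft hexp S hS t ht1
end

section
/- Let G be a (c,d,α,δ)-bipartite expander, and let C₀ be a linear code of minimum distance d₀. For a word x with corrupt set F and unsatisfied constraint set U = {u ∈ R : x_{N(u)} ∉ C₀}, the inclusions N_{≤d₀−1}(F) ⊆ U ⊆ N(F) hold. Consequently, if |F| ≤ αn then ((δd₀−1)/(d₀−1))·c|F| ≤ |U| ≤ c|F|. -/
open Finset
open scoped Classical

/-!
The number of corrupt neighbours of a check `u` is the Hamming distance between `x` and `y`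
restricted to `N(u)`. If it is zero the check is satisfied; if it lies in `[1, d₀ - 1]` the
check is violated, because two codewords of `C₀` are never that close. Double counting the edges between `F` and `R` gives
`∑ᵤ |N(u) ∩ F| = c|F|`, which bounds `|N(F)|` above by `c|F|` and, since checks outside
`N_{≤ d₀-1}(F)` see at least `d₀` corrupt neighbours, also gives
`d₀|N(F)| ≤ (d₀ - 1)|N_{≤ d₀-1}(F)| + c|F|`. Combined with the expansion `δc|F| ≤ |N(F)|`
this is the lower bound.
-/

theorem Submodule.eq_of_hammingDist_lt {K ι : Type*} [Ring K] [DecidableEq K] [Fintype ι]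
    {C : Submodule K (ι → K)} {d₀ : ℕ} (hdist : ∀ w ∈ C, w ≠ 0 → d₀ ≤ hammingNorm w)
    {x y : ι → K} (hx : x ∈ C) (hy : y ∈ C) (hlt : hammingDist x y < d₀) : x = y := by
  by_contra hne
  have := hdist (-x + y) (C.add_mem (C.neg_mem hx) hy) (neg_add_eq_zero.not.mpr hne)
  rw [← hammingDist_eq_hammingNorm] at this
  omega

section TannerGraph

variable {R L ι : Type*} [Fintype ι] [DecidableEq L] (nb : R → ι → L)

section Word

variable [Fintype L] {K : Type*} [DecidableEq K] {x y : L → K} {u : R}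

theorem hammingDist_comp_nb_eq_card :
    hammingDist (fun i => x (nb u i)) (fun i => y (nb u i)) =
      #{i | nb u i ∈ ({v | x v ≠ y v} : Finset L)} := by
  simp only [hammingDist, mem_filter, mem_univ, true_and]

variable [Ring K] {C : Submodule K (ι → K)}

theorem filter_one_le_card_le_subset_filter_notMem [Fintype R] {d₀ : ℕ}
    (hdist : ∀ w ∈ C, w ≠ 0 → d₀ ≤ hammingNorm w) (hy : ∀ u, (fun i => y (nb u i)) ∈ C) :
    ({u | 1 ≤ #{i | nb u i ∈ ({v | x v ≠ y v} : Finset L)} ∧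
        #{i | nb u i ∈ ({v | x v ≠ y v} : Finset L)} ≤ d₀ - 1} : Finset R) ⊆
      ({u | (fun i => x (nb u i)) ∉ C} : Finset R) := by
  intro u hu
  obtain ⟨-, hpos, hle⟩ := mem_filter.1 hu
  refine mem_filter.2 ⟨mem_univ u, fun hx => ?_⟩
  have hcard := hammingDist_comp_nb_eq_card nb (x := x) (y := y) (u := u)
  rw [Submodule.eq_of_hammingDist_lt hdist hx (hy u) (by omega), hammingDist_self] at hcard
  omega

theorem filter_notMem_subset_filter_one_le_card [Fintype R]
    (hy : ∀ u, (fun i => y (nb u i)) ∈ C) :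
    ({u | (fun i => x (nb u i)) ∉ C} : Finset R) ⊆
      ({u | 1 ≤ #{i | nb u i ∈ ({v | x v ≠ y v} : Finset L)}} : Finset R) := by
  intro u hu
  refine mem_filter.2 ⟨mem_univ u, ?_⟩
  rw [← hammingDist_comp_nb_eq_card, Nat.one_le_iff_ne_zero, Ne, hammingDist_eq_zero]
  exact fun heq => (mem_filter.1 hu).2 (heq ▸ hy u)

end Word

theorem sum_card_filter_nb_mem_eq_mul_card [Fintype R] (hinj : ∀ u, Function.Injective (nb u)) {c : ℕ}
    (hleft : ∀ v : L, #{u | ∃ i, nb u i = v} = c) (F : Finset L) :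
    ∑ u, #{i | nb u i ∈ F} = c * #F := by
  have hdeg : ∀ u, #{i | nb u i ∈ F} = #(F.bipartiteAbove (fun u v => ∃ i, nb u i = v) u) := by
    intro u
    rw [← card_image_of_injective _ (hinj u)]
    congr 1
    ext v
    simp only [mem_image, mem_filter, mem_univ, true_and, bipartiteAbove]
    exact ⟨fun ⟨i, hiF, hi⟩ => ⟨hi ▸ hiF, i, hi⟩, fun ⟨hvF, i, hi⟩ => ⟨i, hi ▸ hvF, hi⟩⟩
  simp_rw [hdeg, sum_card_bipartiteAbove_eq_sum_card_bipartiteBelow, bipartiteBelow, hleft,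
    sum_const, smul_eq_mul, mul_comm]

end TannerGraph

section Counting

variable {R : Type*} [Fintype R] (k : R → ℕ)

theorem card_filter_one_le_le_sum : #{u | 1 ≤ k u} ≤ ∑ u, k u := by
  rw [card_filter]
  exact sum_le_sum fun u _ => by split_ifs <;> omega

/-- Points with `k u ≥ d₀` contribute at least `d₀` to the sum, the others at least `1`. -/
theorem mul_card_filter_one_le_add_card_le (d₀ : ℕ) :
    d₀ * #{u | 1 ≤ k u} + #{u | 1 ≤ k u ∧ k u ≤ d₀ - 1} ≤
      d₀ * #{u | 1 ≤ k u ∧ k u ≤ d₀ - 1} + ∑ u, k u := by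
  simp only [card_filter, mul_sum, ← sum_add_distrib]
  exact sum_le_sum fun u _ => by split_ifs <;> omega

end Counting

theorem div_mul_mul_le_of_expansion {δ d₀ c f n a u : ℝ} (hd₀ : 1 < d₀)
    (hexp : δ * c * f ≤ n) (hcount : d₀ * n + a ≤ d₀ * a + c * f) (hau : a ≤ u) :
    (δ * d₀ - 1) / (d₀ - 1) * c * f ≤ u := by
  rw [mul_assoc, div_mul_eq_mul_div, div_le_iff₀ (by linarith)]
  calc (δ * d₀ - 1) * (c * f) = d₀ * (δ * c * f) - c * f := by ring
    _ ≤ d₀ * n - c * f := by gcongr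
    _ ≤ a * (d₀ - 1) := by linarith
    _ ≤ u * (d₀ - 1) := by gcongr

theorem stmt_8_general {L R : Type*} [Fintype L] [Fintype R] [DecidableEq L]
    (c d d₀ n : ℕ) (α δ : ℝ)
    (hd₀2 : 2 ≤ d₀)
    (nb : R → Fin d → L) (hinj : ∀ u, Function.Injective (nb u))
    (hleft : ∀ v : L, (univ.filter (fun u : R => ∃ i, nb u i = v)).card = c)
    (hexp : ∀ S : Finset L, (S.card : ℝ) ≤ α * n →
      δ * c * S.card ≤ ((univ.filter (fun u : R => ∃ i, nb u i ∈ S)).card : ℝ))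
    (C₀ : Submodule (ZMod 2) (Fin d → ZMod 2))
    (hdist : ∀ w ∈ C₀, w ≠ 0 → d₀ ≤ hammingNorm w)
    (x y : L → ZMod 2) (hy : ∀ u : R, (fun i => y (nb u i)) ∈ C₀)
    (F : Finset L) (hF : F = univ.filter (fun v => x v ≠ y v))
    (U : Finset R) (hU : U = univ.filter (fun u : R => (fun i => x (nb u i)) ∉ C₀)) :
    (univ.filter (fun u : R =>
        1 ≤ (univ.filter (fun i : Fin d => nb u i ∈ F)).card ∧
          (univ.filter (fun i : Fin d => nb u i ∈ F)).card ≤ d₀ - 1)) ⊆ U ∧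
      U ⊆ univ.filter (fun u : R => ∃ i, nb u i ∈ F) ∧
      ((F.card : ℝ) ≤ α * n →
        (δ * d₀ - 1) / ((d₀ : ℝ) - 1) * c * F.card ≤ (U.card : ℝ) ∧
          (U.card : ℝ) ≤ c * F.card) := by
  subst hF hU
  set F : Finset L := {v | x v ≠ y v}
  have hN : ({u | ∃ i, nb u i ∈ F} : Finset R) = ({u | 1 ≤ #{i | nb u i ∈ F}} : Finset R) := by
    ext u
    simp [one_le_card, filter_nonempty_iff]
  have hAU := filter_one_le_card_le_subset_filter_notMem nb (x := x) hdist hy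
  have hUN := filter_notMem_subset_filter_one_le_card nb (x := x) hy
  -- `convert` reconciles the instance `Nat.decidableExistsFin` of `hleft` with the generic one.
  have hsum := sum_card_filter_nb_mem_eq_mul_card nb hinj (c := c) (by convert hleft) F
  refine ⟨hAU, hN ▸ hUN, fun hFα => ⟨?_, ?_⟩⟩
  · have hcount := hsum ▸ mul_card_filter_one_le_add_card_le (fun u => #{i | nb u i ∈ F}) d₀
    exact div_mul_mul_le_of_expansion (by exact_mod_cast hd₀2) (hN ▸ hexp F hFα)
      (by exact_mod_cast hcount) ((Nat.cast_le (α := ℝ)).2 (card_le_card hAU))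
  · exact_mod_cast (card_le_card hUN).trans (hsum ▸ card_filter_one_le_le_sum _)

/-- For a Tanner code `T(G,C₀)` on a `(c,d,α,δ)`-bipartite expander with inner code of
minimum distance `d₀`, the corrupt set `F` and unsatisfied set `U` of a word `x`
satisfy `N_{≤ d₀-1}(F) ⊆ U ⊆ N(F)`; consequently, if `|F| ≤ αn` then
`((δd₀-1)/(d₀-1))·c|F| ≤ |U| ≤ c|F|`. -/
theorem stmt_8 {L R : Type*} [Fintype L] [Fintype R] [DecidableEq L]
    (c d d₀ n : ℕ) (α δ : ℝ) (hδ : 0 < δ) (hδ1 : δ ≤ 1) (hc : 0 < c)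
    (hd₀2 : 2 ≤ d₀) (hd₀d : d₀ ≤ d)
    (hn : Fintype.card L = n)
    (nb : R → Fin d → L) (hinj : ∀ u, Function.Injective (nb u))
    (hleft : ∀ v : L, (univ.filter (fun u : R => ∃ i, nb u i = v)).card = c)
    (hexp : ∀ S : Finset L, (S.card : ℝ) ≤ α * n →
      δ * c * S.card ≤ ((univ.filter (fun u : R => ∃ i, nb u i ∈ S)).card : ℝ))
    (C₀ : Submodule (ZMod 2) (Fin d → ZMod 2))
    (hdist : ∀ w ∈ C₀, w ≠ 0 → d₀ ≤ hammingNorm w)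
    (x y : L → ZMod 2) (hy : ∀ u : R, (fun i => y (nb u i)) ∈ C₀)
    (F : Finset L) (hF : F = univ.filter (fun v => x v ≠ y v))
    (U : Finset R) (hU : U = univ.filter (fun u : R => (fun i => x (nb u i)) ∉ C₀)) :
    (univ.filter (fun u : R =>
        1 ≤ (univ.filter (fun i : Fin d => nb u i ∈ F)).card ∧
          (univ.filter (fun i : Fin d => nb u i ∈ F)).card ≤ d₀ - 1)) ⊆ U ∧
      U ⊆ univ.filter (fun u : R => ∃ i, nb u i ∈ F) ∧
      ((F.card : ℝ) ≤ α * n →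
        (δ * d₀ - 1) / ((d₀ : ℝ) - 1) * c * F.card ≤ (U.card : ℝ) ∧
          (U.card : ℝ) ≤ c * F.card) :=
  stmt_8_general c d d₀ n α δ hd₀2 nb hinj hleft hexp C₀ hdist x y hy F hF U hU
end

section
/- Let G₁ be a (c−1,d,α,3/4)-bipartite expander on left set L₁ of size n−d₀ with c ≥ 3 and d₀ ≥ 2, and let G extend G₁ by: adding d₀ new left vertices L₂, adding c new constraints each adjacent to all of L₂ (plus some vertices of L₁), and adding further constraints adjacent only to L₁, in such a way that G is (c,d)-regular. Then G is a (c,d,0.9α,1/d₀)-bipartite expander, provided n ≥ 10d₀. -/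
open Finset
open scoped Classical

/-!
A set `S` of left vertices splits into `S₁ ⊆ L₁` and `S₂ ⊆ L₂`, whose neighbourhoods lie
in the disjoint blocks `R₁` and `R₂ ⊕ R₃`. Since `n ≥ 10 d₀`, the set `S₁` is small enough
for the expansion of `G₁`, giving `|N(S₁)| ≥ (3/4)(c-1)|S₁| ≥ (c/d₀)|S₁|` (as `c ≥ 3` and
`d₀ ≥ 2`). If `S₂` is nonempty it sees all `c` constraints of `R₂`, and `|S₂| ≤ d₀` gives
`c ≥ (c/d₀)|S₂|`.
-/

section Neighbourhood

variable {α β γ δ : Type*} [Fintype γ] [Fintype δ]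

noncomputable def nbhd (Adj : α → γ → Prop) (S : Finset α) : Finset γ :=
  univ.filter fun u => ∃ v ∈ S, Adj v u

lemma mem_nbhd {Adj : α → γ → Prop} {S : Finset α} {u : γ} :
    u ∈ nbhd Adj S ↔ ∃ v ∈ S, Adj v u := by
  simp [nbhd]

lemma card_nbhd_toLeft_add_card_nbhd_toRight_le (Adj : α ⊕ β → γ ⊕ δ → Prop)
    (S : Finset (α ⊕ β)) :
    #(nbhd (fun v u => Adj (.inl v) (.inl u)) S.toLeft) +
        #(nbhd (fun v u => Adj (.inr v) (.inr u)) S.toRight) ≤ #(nbhd Adj S) := by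
  rw [← card_disjSum]
  refine card_le_card fun u hu => ?_
  rcases u with u | u <;>
  · simp only [inl_mem_disjSum, inr_mem_disjSum, mem_nbhd, mem_toLeft, mem_toRight] at hu ⊢
    obtain ⟨v, hv, hadj⟩ := hu
    exact ⟨_, hv, hadj⟩

lemma card_le_card_nbhd_of_forall_adj {Adj : α → γ ⊕ δ → Prop} {S : Finset α}
    (hS : S.Nonempty) (hadj : ∀ v u, Adj v (.inl u)) :
    Fintype.card γ ≤ #(nbhd Adj S) := by
  obtain ⟨v, hv⟩ := hS
  rw [← card_univ, ← card_map Function.Embedding.inl]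
  exact card_le_card fun u hu => by
    obtain ⟨u, -, rfl⟩ := mem_map.mp hu
    exact mem_nbhd.mpr ⟨v, hv, hadj v u⟩

lemma one_div_card_mul_card_mul_card_le_card_nbhd [Fintype β] {Adj : β → γ ⊕ δ → Prop}
    (hadj : ∀ v u, Adj v (.inl u)) (S : Finset β) :
    (1 / (Fintype.card β : ℝ)) * Fintype.card γ * #S ≤ #(nbhd Adj S) := by
  rcases S.eq_empty_or_nonempty with rfl | hS
  · simp
  have hβ : (0 : ℝ) < Fintype.card β := by exact_mod_cast hS.card_pos.trans_le (card_le_univ S)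
  calc (1 / (Fintype.card β : ℝ)) * Fintype.card γ * #S
      = Fintype.card γ * (#S / Fintype.card β) := by ring
    _ ≤ Fintype.card γ * 1 := by
        gcongr
        rw [div_le_one hβ]
        exact_mod_cast card_le_univ S
    _ ≤ #(nbhd Adj S) := by
        rw [mul_one]
        exact_mod_cast card_le_card_nbhd_of_forall_adj hS hadj

end Neighbourhood

lemma one_div_mul_le_three_quarters_mul_sub_one {c d₀ : ℝ} (hc : 3 ≤ c) (hd₀ : 2 ≤ d₀) :
    1 / d₀ * c ≤ 3 / 4 * (c - 1) := by
  calc 1 / d₀ * c ≤ 1 / 2 * c := by gcongr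
    _ ≤ 3 / 4 * (c - 1) := by linarith

theorem stmt_13_general {L₁ L₂ R₁ R₂ R₃ : Type*}
    [Fintype L₂] [Fintype R₁] [Fintype R₂] [Fintype R₃]
    (Adj : (L₁ ⊕ L₂) → (R₁ ⊕ R₂ ⊕ R₃) → Prop)
    (c d₀ n : ℕ) (α : ℝ)
    (hc : 3 ≤ c) (hd₀ : 2 ≤ d₀) (hn : 10 * d₀ ≤ n) (hα : 0 < α)
    (hL₂ : Fintype.card L₂ = d₀)
    (hR₂card : Fintype.card R₂ = c)
    (hexp₁ : ∀ S : Finset L₁, (S.card : ℝ) ≤ α * ((n : ℝ) - d₀) →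
      3 / 4 * ((c : ℝ) - 1) * S.card ≤
        ((univ.filter (fun u : R₁ => ∃ v ∈ S, Adj (Sum.inl v) (Sum.inl u))).card : ℝ))
    (hR₂L : ∀ (u : R₂) (v : L₂), Adj (Sum.inr v) (Sum.inr (Sum.inl u))) :
    ∀ S : Finset (L₁ ⊕ L₂), (S.card : ℝ) ≤ 0.9 * α * n →
      (1 / (d₀ : ℝ)) * c * S.card ≤
        ((univ.filter (fun u : R₁ ⊕ R₂ ⊕ R₃ => ∃ v ∈ S, Adj v u)).card : ℝ) := by
  intro S hS
  have hS₁small : (#S.toLeft : ℝ) ≤ α * (n - d₀) := by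
    have : (#S.toLeft : ℝ) ≤ #S := by exact_mod_cast card_toLeft_le
    have : (10 * d₀ : ℝ) ≤ n := by exact_mod_cast hn
    nlinarith
  have h₁ : 1 / (d₀ : ℝ) * c * #S.toLeft ≤
      #(nbhd (fun v u => Adj (.inl v) (.inl u)) S.toLeft) :=
    calc 1 / (d₀ : ℝ) * c * #S.toLeft ≤ 3 / 4 * (c - 1) * #S.toLeft := by
          gcongr ?_ * _
          exact one_div_mul_le_three_quarters_mul_sub_one (mod_cast hc) (mod_cast hd₀)
      _ ≤ _ := hexp₁ _ hS₁small
  have h₂ : 1 / (d₀ : ℝ) * c * #S.toRight ≤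
      #(nbhd (fun v u => Adj (.inr v) (.inr u)) S.toRight) := by
    simpa only [hL₂, hR₂card] using one_div_card_mul_card_mul_card_le_card_nbhd
      (Adj := fun v u => Adj (.inr v) (.inr u)) (fun v u => hR₂L u v) _
  calc 1 / (d₀ : ℝ) * c * #S
        = 1 / (d₀ : ℝ) * c * #S.toLeft + 1 / (d₀ : ℝ) * c * #S.toRight := by
        rw [← card_toLeft_add_card_toRight (u := S)]; push_cast; ring
    _ ≤ #(nbhd (fun v u => Adj (.inl v) (.inl u)) S.toLeft) +
          #(nbhd (fun v u => Adj (.inr v) (.inr u)) S.toRight) := add_le_add h₁ h₂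
    _ ≤ #(nbhd Adj S) := by exact_mod_cast card_nbhd_toLeft_add_card_nbhd_toRight_le Adj S

/-- Expansion of the extended graph in Proposition 1.2: if the restriction of `G` to
`L₁, R₁` is a `(c-1,d,α,3/4)`-bipartite expander on `|L₁| = n - d₀` left vertices,
every constraint of `R₂` (with `|R₂| = c`) is adjacent to all of `L₂` (with `|L₂| = d₀`),
the constraints of `R₁` and `R₃` are adjacent only to `L₁`, and `G` is `(c,d)`-regular
with `c ≥ 3`, `d₀ ≥ 2`, `n ≥ 10d₀`, then `G` is a `(c,d,0.9α,1/d₀)`-bipartite expander. -/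
theorem stmt_13 {L₁ L₂ R₁ R₂ R₃ : Type*}
    [Fintype L₁] [Fintype L₂] [Fintype R₁] [Fintype R₂] [Fintype R₃]
    [DecidableEq L₁] [DecidableEq L₂]
    (Adj : (L₁ ⊕ L₂) → (R₁ ⊕ R₂ ⊕ R₃) → Prop)
    (c d d₀ n : ℕ) (α : ℝ)
    (hc : 3 ≤ c) (hd₀ : 2 ≤ d₀) (hn : 10 * d₀ ≤ n) (hα : 0 < α)
    (hL₁ : Fintype.card L₁ = n - d₀) (hL₂ : Fintype.card L₂ = d₀)
    (hR₂card : Fintype.card R₂ = c)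
    (hexp₁ : ∀ S : Finset L₁, (S.card : ℝ) ≤ α * ((n : ℝ) - d₀) →
      3 / 4 * ((c : ℝ) - 1) * S.card ≤
        ((univ.filter (fun u : R₁ => ∃ v ∈ S, Adj (Sum.inl v) (Sum.inl u))).card : ℝ))
    (hR₁L : ∀ (u : R₁) (v : L₂), ¬ Adj (Sum.inr v) (Sum.inl u))
    (hR₂L : ∀ (u : R₂) (v : L₂), Adj (Sum.inr v) (Sum.inr (Sum.inl u)))
    (hR₃L : ∀ (u : R₃) (v : L₂), ¬ Adj (Sum.inr v) (Sum.inr (Sum.inr u)))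
    (hleft : ∀ v : L₁ ⊕ L₂, (univ.filter (fun u : R₁ ⊕ R₂ ⊕ R₃ => Adj v u)).card = c)
    (hright : ∀ u : R₁ ⊕ R₂ ⊕ R₃, (univ.filter (fun v : L₁ ⊕ L₂ => Adj v u)).card = d) :
    ∀ S : Finset (L₁ ⊕ L₂), (S.card : ℝ) ≤ 0.9 * α * n →
      (1 / (d₀ : ℝ)) * c * S.card ≤
        ((univ.filter (fun u : R₁ ⊕ R₂ ⊕ R₃ => ∃ v ∈ S, Adj v u)).card : ℝ) :=
  stmt_13_general Adj c d₀ n α hc hd₀ hn hα hL₂ hR₂card hexp₁ hR₂L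
end

section
/- Let G be a (c,d,α,δ)-bipartite expander, C₀ a linear code of minimum distance d₀ with δd₀ > 1, and let γ > 0. If a corrupted word x with corrupt set F satisfies |F| ≤ αn and its unsatisfied constraint set U satisfies |U| ≤ (δ − 1/d₀)·c·γn, then |F| ≤ γn. -/
open Finset
open scoped Classical

/-!
A satisfied constraint `u` next to the corrupt set `F` sees the nonzero codeword
`x|N(u) - y|N(u)` of `C₀`, so at least `d₀` of its edges end in `F`. There are only `c|F|`
edges leaving `F`, hence at most `c|F|/d₀` satisfied neighbours of `F`, while expansion gives
`|N(F)| ≥ δc|F|`. The remaining neighbours are unsatisfied: `|U| ≥ (δ - 1/d₀)c|F|`.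
-/

theorem Submodule.le_hammingDist_of_mem {R M ι : Type*} [Ring R] [AddCommGroup M] [Module R M]
    [Fintype ι] [DecidableEq M] {C : Submodule R (ι → M)} {d₀ : ℕ}
    (hdist : ∀ w ∈ C, w ≠ 0 → d₀ ≤ hammingNorm w) {a b : ι → M} (ha : a ∈ C) (hb : b ∈ C)
    (hab : a ≠ b) : d₀ ≤ hammingDist a b := by
  rw [hammingDist_eq_hammingNorm, neg_add_eq_sub]
  exact hdist _ (C.sub_mem hb ha) (sub_ne_zero.mpr hab.symm)

theorem card_filter_apply_eq_of_injective {ι α : Type*} [Fintype ι] [DecidableEq α] {f : ι → α}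
    (hf : Function.Injective f) (a : α) [Decidable (∃ i, f i = a)] :
    #{i | f i = a} = if ∃ i, f i = a then 1 else 0 := by
  split_ifs with h
  · obtain ⟨i, rfl⟩ := h
    exact card_eq_one.mpr ⟨i, by ext j; simp [hf.eq_iff]⟩
  · simpa using h

section TannerGraph

variable {L R : Type*} [Fintype R] [DecidableEq L] {d : ℕ} {nb : R → Fin d → L}

theorem sum_card_filter_mem_eq_sum_card_neighbors (hinj : ∀ u, Function.Injective (nb u))
    (S : Finset L) :
    ∑ u, #{i | nb u i ∈ S} = ∑ v ∈ S, #{u | ∃ i, nb u i = v} := by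
  calc ∑ u, #{i | nb u i ∈ S}
      = ∑ u, ∑ v ∈ S, #{i | nb u i = v} := by
        refine sum_congr rfl fun u _ => ?_
        rw [card_eq_sum_card_fiberwise (f := nb u) (t := S)
          (fun i hi => by simpa using hi)]
        simp_rw [filter_filter]
        refine sum_congr rfl fun v hv => congrArg card (filter_congr fun i _ => ?_)
        exact and_iff_right_of_imp fun h => h ▸ hv
    _ = ∑ v ∈ S, ∑ u, #{i | nb u i = v} := sum_comm
    _ = ∑ v ∈ S, #{u | ∃ i, nb u i = v} := by
        simp_rw [card_filter_apply_eq_of_injective (hinj _), card_filter]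

theorem card_mul_le_mul_card_of_le_card_filter_mem (hinj : ∀ u, Function.Injective (nb u))
    {c d₀ : ℕ} (hleft : ∀ v, #{u | ∃ i, nb u i = v} = c) {S : Finset L} {T : Finset R}
    (hT : ∀ u ∈ T, d₀ ≤ #{i | nb u i ∈ S}) : #T * d₀ ≤ c * #S :=
  calc #T * d₀ ≤ ∑ u ∈ T, #{i | nb u i ∈ S} := card_nsmul_le_sum _ _ _ hT
    _ ≤ ∑ u, #{i | nb u i ∈ S} := sum_le_sum_of_subset (subset_univ T)
    _ = c * #S := by
      rw [sum_card_filter_mem_eq_sum_card_neighbors hinj, sum_const_nat fun v _ => hleft v,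
        mul_comm]

theorem card_satisfied_neighbors_mul_le [Fintype L] {K M : Type*} [Ring K] [AddCommGroup M]
    [Module K M] [DecidableEq M] (hinj : ∀ u, Function.Injective (nb u)) {c d₀ : ℕ}
    (hleft : ∀ v, #{u | ∃ i, nb u i = v} = c) {C₀ : Submodule K (Fin d → M)}
    (hdist : ∀ w ∈ C₀, w ≠ 0 → d₀ ≤ hammingNorm w) {x y : L → M}
    (hy : ∀ u, (fun i => y (nb u i)) ∈ C₀) {F : Finset L} (hF : F = univ.filter fun v => x v ≠ y v)
    {U : Finset R} (hU : U = univ.filter fun u => (fun i => x (nb u i)) ∉ C₀) :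
    #(univ.filter (fun u => ∃ i, nb u i ∈ F) \ U) * d₀ ≤ c * #F := by
  refine card_mul_le_mul_card_of_le_card_filter_mem hinj hleft fun u hu => ?_
  subst hF hU
  simp only [mem_sdiff, mem_filter, mem_univ, true_and, not_not] at hu
  obtain ⟨⟨i, hi⟩, hx⟩ := hu
  have hne : (fun i => x (nb u i)) ≠ fun i => y (nb u i) := fun h => hi (congrFun h i)
  simpa [hammingDist] using C₀.le_hammingDist_of_mem hdist hx (hy u) hne

end TannerGraph

theorem stmt_16_general {L R : Type*} [Fintype L] [Fintype R] [DecidableEq L]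
    (c d d₀ n : ℕ) (α δ γ : ℝ) (hc : 0 < c)
    (hδd₀ : 1 < δ * d₀)
    (nb : R → Fin d → L) (hinj : ∀ u, Function.Injective (nb u))
    (hleft : ∀ v : L, (univ.filter (fun u : R => ∃ i, nb u i = v)).card = c)
    (hexp : ∀ S : Finset L, (S.card : ℝ) ≤ α * n →
      δ * c * S.card ≤ ((univ.filter (fun u : R => ∃ i, nb u i ∈ S)).card : ℝ))
    (C₀ : Submodule (ZMod 2) (Fin d → ZMod 2))
    (hdist : ∀ w ∈ C₀, w ≠ 0 → d₀ ≤ hammingNorm w)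
    (x y : L → ZMod 2) (hy : ∀ u : R, (fun i => y (nb u i)) ∈ C₀)
    (F : Finset L) (hF : F = univ.filter (fun v => x v ≠ y v))
    (U : Finset R) (hU : U = univ.filter (fun u : R => (fun i => x (nb u i)) ∉ C₀))
    (hFα : (F.card : ℝ) ≤ α * n)
    (hUsmall : (U.card : ℝ) ≤ (δ - 1 / d₀) * c * (γ * n)) :
    (F.card : ℝ) ≤ γ * n := by
  have hd₀ : (0 : ℝ) < d₀ := Nat.cast_pos.mpr <| Nat.pos_of_ne_zero fun h => by
    norm_num [h] at hδd₀
  have hexpF := hexp F hFα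
  have hsat : (#(univ.filter (fun u => ∃ i, nb u i ∈ F) \ U) * d₀ : ℝ) ≤ c * #F := by
    exact_mod_cast card_satisfied_neighbors_mul_le hinj hleft hdist hy hF hU
  have hsplit : (#(univ.filter fun u => ∃ i, nb u i ∈ F) : ℝ) ≤
      #(univ.filter (fun u => ∃ i, nb u i ∈ F) \ U) + #U := by
    exact_mod_cast card_le_card_sdiff_add_card
  have hunsat : (δ - 1 / d₀) * c * #F ≤ (#U : ℝ) := by
    have : (#(univ.filter (fun u => ∃ i, nb u i ∈ F) \ U) : ℝ) ≤ c * #F / d₀ := by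
      rwa [le_div_iff₀ hd₀]
    have : (δ - 1 / d₀) * c * #F = δ * c * #F - c * #F / d₀ := by ring
    linarith
  have hpos : 0 < (δ - 1 / d₀) * c := by
    have : 1 / (d₀ : ℝ) < δ := by rwa [div_lt_iff₀ hd₀]
    exact mul_pos (by linarith) (by exact_mod_cast hc)
  exact le_of_mul_le_mul_left (hunsat.trans hUsmall) hpos

/-- Claim 4.4: for a Tanner code on a `(c,d,α,δ)`-bipartite expander with `δd₀ > 1`,
if the corrupt set `F` of `x` satisfies `|F| ≤ αn` and the unsatisfied set `U`
satisfies `|U| ≤ (δ - 1/d₀)·c·γn`, then `|F| ≤ γn`. -/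
theorem stmt_16 {L R : Type*} [Fintype L] [Fintype R] [DecidableEq L]
    (c d d₀ n : ℕ) (α δ γ : ℝ) (hδ : 0 < δ) (hδ1 : δ ≤ 1) (hc : 0 < c)
    (hd₀d : d₀ ≤ d) (hδd₀ : 1 < δ * d₀) (hγ : 0 < γ)
    (hn : Fintype.card L = n)
    (nb : R → Fin d → L) (hinj : ∀ u, Function.Injective (nb u))
    (hleft : ∀ v : L, (univ.filter (fun u : R => ∃ i, nb u i = v)).card = c)
    (hexp : ∀ S : Finset L, (S.card : ℝ) ≤ α * n →
      δ * c * S.card ≤ ((univ.filter (fun u : R => ∃ i, nb u i ∈ S)).card : ℝ))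
    (C₀ : Submodule (ZMod 2) (Fin d → ZMod 2))
    (hdist : ∀ w ∈ C₀, w ≠ 0 → d₀ ≤ hammingNorm w)
    (x y : L → ZMod 2) (hy : ∀ u : R, (fun i => y (nb u i)) ∈ C₀)
    (F : Finset L) (hF : F = univ.filter (fun v => x v ≠ y v))
    (U : Finset R) (hU : U = univ.filter (fun u : R => (fun i => x (nb u i)) ∉ C₀))
    (hFα : (F.card : ℝ) ≤ α * n)
    (hUsmall : (U.card : ℝ) ≤ (δ - 1 / d₀) * c * (γ * n)) :
    (F.card : ℝ) ≤ γ * n :=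
  stmt_16_general c d d₀ n α δ γ hc hδd₀ nb hinj hleft hexp C₀ hdist x y hy F hF U hU hFα hUsmall
end
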